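/- arXiv:0802.0282 — 2 statements merged into one kernel-verified Lean document; each statement's English description precedes it below -/
import Mathlib

section
/- Let L/K be a finite Galois extension of fields with cyclic Galois group of order d prime to the characteristic of K, generated by φ. If there exists a complete flag of K-subspaces V_0 ⊂ V_1 ⊂ ⋯ ⊂ V_{d-1} = L with dim V_k = k+1, each invariant under φ, then the polynomial X^d - 1 splits into linear factors over K (equivalently, K contains a primitive d-th root of unity). -/
open Polynomial

/-- Auxiliary: a product of linear factors splits. -/
lemma aux_splits_multiset_linear {K : Type*} [Field K] (s : Multiset K) :
    ((s.map fun c => (X : K[X]) - C c).prod).Splits := by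
  induction s using Multiset.induction with
  | empty => simpa using (Splits.one : (1 : K[X]).Splits)
  | cons a s ih =>
      rw [Multiset.map_cons, Multiset.prod_cons]
      exact Splits.mul (Splits.X_sub_C _) ih

/-- Auxiliary triangularization step: if `f` preserves `W' ≤ W` with
`finrank W = finrank W' + 1`, and `p` annihilates `W'` under `aeval f`, then
for some `c : K`, `p * (X - C c)` annihilates `W`. -/
lemma aux_step {K L : Type*} [Field K] [AddCommGroup L] [Module K L]
    [FiniteDimensional K L] (f : L →ₗ[K] L) (W' W : Submodule K L) (hle : W' ≤ W)
    (hrk : Module.finrank K W = Module.finrank K W' + 1)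
    (hW' : ∀ v ∈ W', f v ∈ W') (hW : ∀ v ∈ W, f v ∈ W)
    (p : K[X]) (hp : ∀ v ∈ W', (aeval f p) v = 0) :
    ∃ c : K, ∀ v ∈ W, (aeval f (p * (X - C c))) v = 0 := by
  -- pick w₀ ∈ W \ W'
  have hne : W' ≠ W := by
    intro h; rw [h] at hrk; omega
  obtain ⟨w₀, hw₀W, hw₀W'⟩ : ∃ w₀ ∈ W, w₀ ∉ W' := by
    by_contra h
    push_neg at h
    exact hne (le_antisymm hle h)
  have hsup : W' ⊔ Submodule.span K {w₀} = W := by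
    have hsle : W' ⊔ Submodule.span K {w₀} ≤ W := by
      refine sup_le hle ?_
      rwa [Submodule.span_singleton_le_iff_mem]
    have hlt : W' < W' ⊔ Submodule.span K {w₀} := by
      refine lt_of_le_of_ne le_sup_left ?_
      intro h
      apply hw₀W'
      rw [h]
      exact Submodule.mem_sup_right (Submodule.mem_span_singleton_self w₀)
    have h1 : Module.finrank K W' < Module.finrank K (W' ⊔ Submodule.span K {w₀} : Submodule K L) :=
      Submodule.finrank_lt_finrank_of_lt hlt
    exact Submodule.eq_of_le_of_finrank_le hsle (by omega)
  -- write f w₀ = u + c • w₀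
  have hfw₀ : f w₀ ∈ W' ⊔ Submodule.span K {w₀} := hsup ▸ hW w₀ hw₀W
  rw [Submodule.mem_sup] at hfw₀
  obtain ⟨u, hu, z, hz, huz⟩ := hfw₀
  rw [Submodule.mem_span_singleton] at hz
  obtain ⟨c, rfl⟩ := hz
  refine ⟨c, fun v hv => ?_⟩
  -- f v - c • v ∈ W' for all v ∈ W
  have hkey : ∀ v ∈ W, f v - c • v ∈ W' := by
    intro v hvW
    rw [← hsup, Submodule.mem_sup] at hvW
    obtain ⟨u', hu', z', hz', rfl⟩ := hvW
    rw [Submodule.mem_span_singleton] at hz'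
    obtain ⟨a, rfl⟩ := hz'
    have : f (u' + a • w₀) - c • (u' + a • w₀)
        = (f u' - c • u') + a • (f w₀ - c • w₀) := by
      simp only [map_add, map_smul, smul_add, smul_sub]
      module
    rw [this]
    have h1 : f u' - c • u' ∈ W' := Submodule.sub_mem _ (hW' u' hu') (Submodule.smul_mem _ _ hu')
    have h2 : f w₀ - c • w₀ = u := by rw [← huz]; abel
    exact Submodule.add_mem _ h1 (Submodule.smul_mem _ _ (h2 ▸ hu))
  rw [map_mul, Module.End.mul_apply]
  have : (aeval f (X - C c)) v = f v - c • v := by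
    simp [Module.algebraMap_end_apply]
  rw [this]
  exact hp _ (hkey v hv)

/-- If a cyclic extension `L/K` of degree `d` prime to the characteristic admits a
complete flag of `K`-subspaces invariant under a generator `φ` of the Galois group,
then `X^d - 1` splits over `K` (so `K` contains a primitive `d`-th root of unity). -/
theorem flag_invariant_implies_splits {K L : Type*} [Field K] [Field L]
    [Algebra K L] [FiniteDimensional K L] [IsGalois K L]
    (d : ℕ) (hd : 0 < d) (hchar : (d : K) ≠ 0)
    (hdeg : Module.finrank K L = d)
    (φ : L ≃ₐ[K] L) (hgen : ∀ σ : L ≃ₐ[K] L, σ ∈ Subgroup.zpowers φ)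
    (V : Fin d → Submodule K L) (hmono : Monotone V)
    (hdim : ∀ k : Fin d, Module.finrank K (V k) = (k : ℕ) + 1)
    (htop : V ⟨d - 1, by omega⟩ = ⊤)
    (hinv : ∀ k : Fin d, (V k).map φ.toLinearMap = V k) :
    ((X : Polynomial K) ^ d - 1).Splits := by
  set f := φ.toLinearMap with hf
  have hmem : ∀ (k : Fin d), ∀ v ∈ V k, f v ∈ V k := by
    intro k v hv
    rw [← hinv k]
    exact Submodule.mem_map_of_mem hv
  -- build annihilating product of linear factors by induction on the flag
  have key : ∀ k : ℕ, ∀ hk : k < d, ∃ s : Multiset K, Multiset.card s = k + 1 ∧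
      ∀ v ∈ V ⟨k, hk⟩, (aeval f ((s.map fun c => (X : K[X]) - C c).prod)) v = 0 := by
    intro k
    induction k with
    | zero =>
        intro hk
        obtain ⟨c, hc⟩ := aux_step f ⊥ (V ⟨0, hk⟩) bot_le
          (by rw [hdim]; simp) (by simp) (hmem _) 1 (by simp)
        refine ⟨{c}, by simp, fun v hv => ?_⟩
        simpa using hc v hv
    | succ n ih =>
        intro hk
        have hn : n < d := Nat.lt_of_succ_lt hk
        obtain ⟨s, hcard, hs⟩ := ih hn
        obtain ⟨c, hc⟩ := aux_step f (V ⟨n, hn⟩) (V ⟨n + 1, hk⟩)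
          (hmono (by simp [Fin.mk_le_mk]))
          (by rw [hdim, hdim]) (hmem _) (hmem _) _ hs
        refine ⟨c ::ₘ s, by simp [hcard], fun v hv => ?_⟩
        rw [Multiset.map_cons, Multiset.prod_cons, mul_comm]
        exact hc v hv
  obtain ⟨s, hcard, hs⟩ := key (d - 1) (by omega)
  set q : K[X] := (s.map fun c => (X : K[X]) - C c).prod with hq
  have hq0 : aeval f q = 0 := by
    ext v
    exact hs v (htop ▸ Submodule.mem_top)
  -- the order of φ is d
  have horder : orderOf φ = d := by
    have htop' : Subgroup.zpowers φ = ⊤ := by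
      rw [Subgroup.eq_top_iff']; exact hgen
    rw [← Nat.card_zpowers, htop', Subgroup.card_top,
      IsGalois.card_aut_eq_finrank, hdeg]
  -- minimal polynomial of f is X^d - 1
  have hmin : minpoly K f = X ^ d - 1 := by
    rw [hf, minpoly_algEquiv_toLinearMap φ (isOfFinOrder_of_finite φ), horder, map_one]
  have hdvd : ((X : K[X]) ^ d - 1) ∣ q := by
    rw [← hmin]
    exact minpoly.dvd K f hq0
  -- both monic of natDegree d, hence equal
  have hmonicq : q.Monic :=
    monic_multiset_prod_of_monic _ _ (fun c _ => monic_X_sub_C c)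
  have hmonic : ((X : K[X]) ^ d - 1).Monic := monic_X_pow_sub_C 1 hd.ne'
  have hdegq : q.natDegree = d := by
    rw [hq, natDegree_multiset_prod_of_monic _ (by
      intro p hp
      obtain ⟨c, _, rfl⟩ := Multiset.mem_map.mp hp
      exact monic_X_sub_C c)]
    simp only [Multiset.map_map, Function.comp]
    rw [Multiset.map_congr rfl (fun c _ => natDegree_X_sub_C c)]
    rw [Multiset.map_const', Multiset.sum_replicate, smul_eq_mul, mul_one, hcard]
    omega
  have hdegX : ((X : K[X]) ^ d - 1).natDegree = d := by
    rw [← C_1]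
    exact natDegree_X_pow_sub_C
  have heq : ((X : K[X]) ^ d - 1) = q := by
    refine eq_of_dvd_of_natDegree_le_of_leadingCoeff hdvd (by rw [hdegq, hdegX]) ?_
    rw [hmonic.leadingCoeff, hmonicq.leadingCoeff]
  rw [heq]
  exact aux_splits_multiset_linear s
end

section
/- Let E be an elliptic curve over 𝔽_q with exactly D rational points where D is squarefree, odd, and D ≢ 1 mod p. If 𝒪 is an order in an imaginary quadratic field containing ℤ[φ] (φ the Frobenius), then 𝒪 is maximal at every odd prime ℓ dividing D; in particular ℤ[φ] is integrally closed locally at every odd prime dividing D. -/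
open NumberField

-- Step 1 arithmetic lemma
theorem aux_disc_not_div (q : ℕ) (t : ℤ) (D : ℕ) (hD : (D : ℤ) = (q : ℤ) + 1 - t)
    (hsqfree : Squarefree D) (ℓ : ℕ) (hℓ : ℓ.Prime) (hℓodd : Odd ℓ) (hℓD : ℓ ∣ D) :
    ¬ ((ℓ:ℤ)^2 ∣ t^2 - 4*(q:ℤ)) := by
  intro hc
  have hℓZ : Prime (ℓ:ℤ) := Nat.prime_iff_prime_int.mp hℓ
  have hℓ2 : ¬ (ℓ ∣ 2) := by
    intro h
    have := (Nat.prime_dvd_prime_iff_eq hℓ Nat.prime_two).mp h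
    rw [this] at hℓodd; exact (Nat.not_odd_iff_even.mpr even_two) hℓodd
  have ht : t = (q:ℤ) + 1 - (D:ℤ) := by linarith
  have hkey : t^2 - 4*(q:ℤ) = ((q:ℤ)-1)^2 - 2*((q:ℤ)+1)*(D:ℤ) + (D:ℤ)^2 := by
    rw [ht]; ring
  have hℓDZ : (ℓ:ℤ) ∣ (D:ℤ) := Int.natCast_dvd_natCast.mpr hℓD
  have hdvd1 : (ℓ:ℤ) ∣ t^2 - 4*(q:ℤ) := dvd_trans (dvd_pow_self _ two_ne_zero) hc
  have hq1 : (ℓ:ℤ) ∣ ((q:ℤ)-1) := by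
    have h2 : (ℓ:ℤ) ∣ ((q:ℤ)-1)^2 := by
      have : ((q:ℤ)-1)^2 = (t^2 - 4*(q:ℤ)) + 2*((q:ℤ)+1)*(D:ℤ) - (D:ℤ)^2 := by
        rw [hkey]; ring
      rw [this]
      exact dvd_sub (dvd_add hdvd1 (Dvd.dvd.mul_left hℓDZ _)) (hℓDZ.trans (dvd_pow_self _ two_ne_zero))
    exact hℓZ.dvd_of_dvd_pow h2
  -- ℓ² ∣ 2(q+1)D
  have h2qD : (ℓ:ℤ)^2 ∣ 2*((q:ℤ)+1)*(D:ℤ) := by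
    have h1 : (ℓ:ℤ)^2 ∣ ((q:ℤ)-1)^2 := pow_dvd_pow_of_dvd hq1 2
    have h2 : (ℓ:ℤ)^2 ∣ (D:ℤ)^2 := pow_dvd_pow_of_dvd hℓDZ 2
    have : 2*((q:ℤ)+1)*(D:ℤ) = ((q:ℤ)-1)^2 + (D:ℤ)^2 - (t^2 - 4*(q:ℤ)) := by
      rw [hkey]; ring
    rw [this]
    exact dvd_sub (dvd_add h1 h2) hc
  obtain ⟨d, hd⟩ := hℓDZ
  have hℓd : ¬ (ℓ:ℤ) ∣ d := by
    intro h
    obtain ⟨e, he⟩ := h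
    have : ((ℓ*ℓ : ℕ) : ℤ) ∣ (D:ℤ) := by
      rw [hd, he]; push_cast; exact ⟨e, by ring⟩
    have := Int.natCast_dvd_natCast.mp this
    exact hℓ.not_isUnit (hsqfree ℓ this)
  have hstep : (ℓ:ℤ) ∣ 2*((q:ℤ)+1)*d := by
    have h := h2qD
    rw [hd] at h
    obtain ⟨c, hc'⟩ := h
    refine ⟨c, ?_⟩
    have hℓ0 : (ℓ:ℤ) ≠ 0 := Int.natCast_ne_zero.mpr hℓ.ne_zero
    have : (ℓ:ℤ) * (2*((q:ℤ)+1)*d) = (ℓ:ℤ) * ((ℓ:ℤ)*c) := by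
      have : 2*((q:ℤ)+1)*((ℓ:ℤ)*d) = (ℓ:ℤ)^2*c := hc'
      nlinarith [this]
    exact mul_left_cancel₀ hℓ0 this
  have hq1' : (ℓ:ℤ) ∣ ((q:ℤ)+1) := by
    rcases (hℓZ.dvd_mul.mp hstep) with h | h
    · rcases hℓZ.dvd_mul.mp h with h' | h'
      · exact absurd (Int.natCast_dvd_natCast.mp (by exact_mod_cast h' : (ℓ:ℤ) ∣ ((2:ℕ):ℤ))) hℓ2
      · exact h'
    · exact absurd h hℓd
  have : (ℓ:ℤ) ∣ 2 := by
    have := dvd_sub hq1' hq1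
    simpa using this
  exact hℓ2 (Int.natCast_dvd_natCast.mp (by exact_mod_cast this : (ℓ:ℤ) ∣ ((2:ℕ):ℤ)))


set_option maxHeartbeats 1000000 in
/-- Let `E/𝔽_q` (`q = p^f`) be an ordinary elliptic curve with `#E(𝔽_q) = D`,
`D` squarefree, odd, `D ≢ 1 (mod p)`; its Frobenius `φ` satisfies
`φ² - tφ + q = 0` with `t = q + 1 - D`, and generates an order `ℤ[φ]` in the
imaginary quadratic field `K` (so `t² < 4q`).  Then any order `𝒪` of `K`
containing `φ` (in particular `ℤ[φ]` itself) is maximal at every odd prime `ℓ`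
dividing `D`: the index `[𝒪_K : 𝒪]` is prime to `ℓ`. -/
theorem order_maximal_at_odd_primes_dividing_D
    {K : Type*} [Field K] [NumberField K] (hK : Module.finrank ℚ K = 2)
    (p f : ℕ) (hp : p.Prime) (hf : 0 < f) (q : ℕ) (hq : q = p ^ f)
    (t : ℤ) (D : ℕ) (hD : (D : ℤ) = (q : ℤ) + 1 - t)
    (hsqfree : Squarefree D) (hodd : Odd D) (hD1 : (D : ZMod p) ≠ 1)
    (hordinary : ¬ (p : ℤ) ∣ t) (himag : t ^ 2 < 4 * (q : ℤ))
    (φ : 𝓞 K) (hφ : φ ^ 2 - (t : 𝓞 K) * φ + (q : 𝓞 K) = 0) :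
    ∀ ℓ : ℕ, ℓ.Prime → Odd ℓ → ℓ ∣ D →
      ∀ O : Subalgebra ℤ (𝓞 K), φ ∈ O →
        ¬ ℓ ∣ Nat.card ((𝓞 K) ⧸ O.toSubring.toAddSubgroup) := by
  intro ℓ hℓ hℓodd hℓD O hφO hdvd
  set S : Submodule ℤ (𝓞 K) := Submodule.span ℤ {1, φ} with hS
  set S' : AddSubgroup (𝓞 K) := S.toAddSubgroup with hS'
  have hle : S' ≤ O.toSubring.toAddSubgroup := by
    intro x hx
    have : S ≤ Subalgebra.toSubmodule O := by
      rw [hS, Submodule.span_le]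
      rintro y (rfl | rfl)
      · exact O.one_mem
      · exact hφO
    exact this hx
  have hdvdS : ℓ ∣ Nat.card ((𝓞 K) ⧸ S') :=
    dvd_trans hdvd (AddSubgroup.index_dvd_of_le hle)
  set φK : K := algebraMap (𝓞 K) K φ with hφK
  have hinj : Function.Injective (algebraMap (𝓞 K) K) := RingOfIntegers.coe_injective
  have hφKrel : φK ^ 2 - (t:K) * φK + (q:K) = 0 := by
    have := congrArg (algebraMap (𝓞 K) K) hφ
    push_cast at this
    simpa [hφK] using this
  have hQinj : Function.Injective (algebraMap ℚ K) := (algebraMap ℚ K).injective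
  have himagQ : (t:ℚ)^2 < 4*(q:ℚ) := by exact_mod_cast himag
  -- no rational root
  have hirr : ∀ c : ℚ, φK ≠ algebraMap ℚ K c := by
    intro c hc
    have h0 : algebraMap ℚ K (c^2 - (t:ℚ)*c + (q:ℚ)) = 0 := by
      simp only [map_add, map_sub, map_mul, map_pow]
      rw [← hc]
      rw [show algebraMap ℚ K (t:ℚ) = (t:K) by simp, show algebraMap ℚ K (q:ℚ) = (q:K) by simp]
      exact hφKrel
    have h1 : c^2 - (t:ℚ)*c + (q:ℚ) = 0 := by
      apply hQinj
      simpa using h0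
    nlinarith [sq_nonneg (2*c - (t:ℚ))]
  -- linear independence of 1, φK over ℚ
  have hli : LinearIndependent ℚ ![(1:K), φK] := by
    rw [LinearIndependent.pair_iff]
    intro s u hsu
    have hsu' : (s:K) + (u:K) * φK = 0 := by
      rw [← hsu, Rat.smul_def, Rat.smul_def, mul_one]
    by_cases hu : u = 0
    · subst hu
      refine ⟨?_, rfl⟩
      apply hQinj
      simpa using hsu'
    · exfalso
      apply hirr (-s/u)
      have huK : (u:K) ≠ 0 := by exact_mod_cast hu
      rw [show algebraMap ℚ K (-s/u) = ((-s/u : ℚ) : K) by simp]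
      push_cast
      field_simp
      linear_combination hsu'
  have hspan : Submodule.span ℚ (Set.range ![(1:K), φK]) = ⊤ :=
    hli.span_eq_top_of_card_eq_finrank (by simp [hK])
  -- torsion
  have htor : ∀ x : 𝓞 K, ∃ n : ℕ, n ≠ 0 ∧ (n:ℤ) • x ∈ S := by
    intro x
    have hx : (algebraMap (𝓞 K) K x) ∈ Submodule.span ℚ {(1:K), φK} := by
      rw [show ({(1:K), φK} : Set K) = Set.range ![(1:K), φK] by
        simp [Matrix.range_cons, Matrix.range_empty, Set.pair_comm]]
      rw [hspan]; trivial
    obtain ⟨c, d, hcd⟩ := Submodule.mem_span_pair.mp hx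
    refine ⟨c.den * d.den, by positivity, ?_⟩
    have key : ((c.den * d.den : ℕ) : ℤ) • x = (c.num * d.den) • (1 : 𝓞 K) + (d.num * c.den) • φ := by
      apply hinj
      rw [map_add, map_zsmul, map_zsmul, map_zsmul, map_one]
      have hz : ∀ (m : ℤ) (v : K), m • v = ((m:ℚ)) • v :=
        fun m v => (Int.cast_smul_eq_zsmul ℚ m v).symm
      rw [hz, hz, hz, ← hcd, smul_add, smul_smul, smul_smul]
      congr 1
      · congr 1
        push_cast
        rw [mul_comm (c.den:ℚ) (d.den:ℚ), mul_assoc, mul_comm (c.den : ℚ) c, Rat.mul_den_eq_num]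
        ring
      · congr 1
        push_cast
        rw [mul_assoc, mul_comm (d.den : ℚ) d, Rat.mul_den_eq_num]
        ring
    rw [key]
    exact Submodule.add_mem _ (Submodule.smul_mem _ _ (Submodule.subset_span (by simp)))
      (Submodule.smul_mem _ _ (Submodule.subset_span (by simp)))
  -- finiteness of the quotient
  have hfin : Finite ((𝓞 K) ⧸ S') := by
    have hfg : AddGroup.FG ((𝓞 K) ⧸ S') := by
      have h1 : AddGroup.FG (𝓞 K) := Module.Finite.iff_addGroup_fg.mp inferInstance
      exact AddGroup.fg_of_surjective (f := QuotientAddGroup.mk' S')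
        (QuotientAddGroup.mk'_surjective S')
    apply AddCommGroup.finite_of_fg_torsion
    intro y
    obtain ⟨x, rfl⟩ := QuotientAddGroup.mk'_surjective S' y
    obtain ⟨n, hn0, hn⟩ := htor x
    rw [isOfFinAddOrder_iff_nsmul_eq_zero]
    refine ⟨n, Nat.pos_of_ne_zero hn0, ?_⟩
    rw [← map_nsmul, QuotientAddGroup.mk'_apply, QuotientAddGroup.eq_zero_iff]
    have : (n : ℤ) • x = n • x := natCast_zsmul x n
    rw [← this]
    exact hn
  -- get element of order ℓ
  have : Fintype ((𝓞 K) ⧸ S') := Fintype.ofFinite _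
  have hcard : ℓ ∣ Fintype.card ((𝓞 K) ⧸ S') := by
    rwa [← Nat.card_eq_fintype_card]
  haveI : Fact ℓ.Prime := ⟨hℓ⟩
  obtain ⟨y, hy⟩ := exists_prime_addOrderOf_dvd_card ℓ hcard
  obtain ⟨x, rfl⟩ := QuotientAddGroup.mk'_surjective S' y
  have hxS : x ∉ S := by
    intro hmem
    have : QuotientAddGroup.mk' S' x = 0 := (QuotientAddGroup.eq_zero_iff x).mpr hmem
    rw [this] at hy
    simp at hy
    exact hℓ.one_lt.ne' hy.symm
  have hℓx : (ℓ:ℤ) • x ∈ S := by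
    have h1 : ℓ • (QuotientAddGroup.mk' S' x) = 0 := by
      rw [← hy]; exact addOrderOf_nsmul_eq_zero _
    rw [← map_nsmul, QuotientAddGroup.mk'_apply, QuotientAddGroup.eq_zero_iff] at h1
    rwa [natCast_zsmul]
  obtain ⟨a, b, hab⟩ := Submodule.mem_span_pair.mp hℓx
  have hℓZ : Prime (ℓ:ℤ) := Nat.prime_iff_prime_int.mp hℓ
  have hℓ2 : ¬ ((ℓ:ℤ) ∣ 2) := by
    intro h
    have h' : ℓ ∣ 2 := by exact_mod_cast h
    have := (Nat.prime_dvd_prime_iff_eq hℓ Nat.prime_two).mp h'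
    rw [this] at hℓodd
    exact (Nat.not_odd_iff_even.mpr even_two) hℓodd
  have hab' : (a : 𝓞 K) + (b : 𝓞 K) * φ = (ℓ : 𝓞 K) * x := by
    have h := hab
    rw [zsmul_eq_mul, zsmul_eq_mul, zsmul_eq_mul, mul_one] at h
    push_cast at h ⊢
    exact h
  set xK : K := algebraMap (𝓞 K) K x with hxK
  have hid : (ℓ:𝓞 K)^2 * x^2 - ((2*a + b*t : ℤ) : 𝓞 K)*((ℓ:𝓞 K)*x) + ((a^2 + a*b*t + b^2*(q:ℤ) : ℤ) : 𝓞 K) = 0 := by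
    push_cast
    linear_combination ((b:𝓞 K)^2) * hφ + (2*(a:𝓞 K) + (b:𝓞 K)*(t:𝓞 K) - (ℓ:𝓞 K)*x - (a:𝓞 K) - (b:𝓞 K)*φ) * hab'
  have hidK : (ℓ:K)^2 * xK^2 - ((2*a + b*t : ℤ) : K)*((ℓ:K)*xK) + ((a^2 + a*b*t + b^2*(q:ℤ) : ℤ) : K) = 0 := by
    have h := congrArg (algebraMap (𝓞 K) K) hid
    simp only [map_add, map_sub, map_mul, map_pow, map_intCast, map_natCast, map_zero] at h
    exact h
  have hl0 : ((ℓ:ℚ)) ≠ 0 := Nat.cast_ne_zero.mpr hℓ.ne_zero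
  have hlK : ((ℓ:K)) ≠ 0 := Nat.cast_ne_zero.mpr hℓ.ne_zero
  set c1 : ℚ := -(((2*a + b*t : ℤ)):ℚ)/(ℓ:ℚ) with hc1def
  set c0 : ℚ := ((a^2 + a*b*t + b^2*(q:ℤ) : ℤ):ℚ)/(ℓ:ℚ)^2 with hc0def
  set P : Polynomial ℚ := Polynomial.X^2 + Polynomial.C c1 * Polynomial.X + Polynomial.C c0 with hP
  have hdeglt : (Polynomial.C c1 * Polynomial.X + Polynomial.C c0).degree < ((Polynomial.X : Polynomial ℚ)^2).degree := by
    apply lt_of_le_of_lt (Polynomial.degree_linear_le)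
    rw [Polynomial.degree_X_pow]; decide
  have hPdeg : P.degree = 2 := by
    rw [hP, add_assoc, Polynomial.degree_add_eq_left_of_degree_lt hdeglt, Polynomial.degree_X_pow]; rfl
  have hPmonic : P.Monic := by
    rw [hP, add_assoc]
    exact (Polynomial.monic_X_pow 2).add_of_left hdeglt
  have hPeval : Polynomial.aeval xK P = 0 := by
    rw [hP]
    simp only [map_add, map_mul, map_pow, Polynomial.aeval_X, Polynomial.aeval_C]
    rw [show algebraMap ℚ K c1 = ((c1:ℚ):K) by simp, show algebraMap ℚ K c0 = ((c0:ℚ):K) by simp]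
    rw [hc1def, hc0def]
    have hidK2 := hidK
    push_cast at hidK2 ⊢
    field_simp
    linear_combination hidK2
  have hxint : IsIntegral ℚ xK := IsIntegral.of_finite ℚ xK
  have hdvdP : minpoly ℚ xK ∣ P := minpoly.dvd ℚ xK hPeval
  have hmp : minpoly ℚ xK = (minpoly ℤ x).map (algebraMap ℤ ℚ) :=
    minpoly.isIntegrallyClosed_eq_field_fractions ℚ K (RingOfIntegers.isIntegral x)
  have hmin_monic : (minpoly ℚ xK).Monic := minpoly.monic hxint
  have hndP : P.natDegree = 2 := Polynomial.natDegree_eq_of_degree_eq_some hPdeg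
  have hle2 : (minpoly ℚ xK).natDegree ≤ 2 := by
    rw [← hndP]; exact Polynomial.natDegree_le_of_dvd hdvdP hPmonic.ne_zero
  have hpos : 0 < (minpoly ℚ xK).natDegree := minpoly.natDegree_pos hxint
  have hcase : (minpoly ℚ xK).natDegree = 1 ∨ (minpoly ℚ xK).natDegree = 2 := by omega
  rcases hcase with h1 | h2
  · -- degree 1 : x is a rational integer, so x ∈ S, contradiction
    obtain ⟨r, hr⟩ := minpoly.natDegree_eq_one_iff.mp h1
    have hrint : IsIntegral ℤ r := by
      apply IsIntegral.tower_bot hQinj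
      rw [hr]
      exact RingOfIntegers.isIntegral_coe x
    obtain ⟨m, hm⟩ := IsIntegrallyClosed.isIntegral_iff.mp hrint
    apply hxS
    have hxm : x = (m : 𝓞 K) := by
      apply hinj
      rw [show algebraMap (𝓞 K) K ((m:ℤ) : 𝓞 K) = ((m:ℤ):K) by push_cast; rfl]
      rw [← hxK, ← hr, ← hm]
      simp
    rw [hxm, show ((m:ℤ) : 𝓞 K) = (m:ℤ) • (1 : 𝓞 K) by rw [zsmul_eq_mul, mul_one]]
    exact Submodule.smul_mem _ _ (Submodule.subset_span (by simp))
  · -- degree 2 : P is the minimal polynomial, so its coefficients are integers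
    obtain ⟨cp, hcp⟩ := hdvdP
    have hcp0 : cp ≠ 0 := by
      rintro rfl
      rw [mul_zero] at hcp
      exact hPmonic.ne_zero hcp
    have hnd : cp.natDegree = 0 := by
      have h := Polynomial.natDegree_mul hmin_monic.ne_zero hcp0
      rw [← hcp, hndP, h2] at h
      omega
    have hcpC : cp = Polynomial.C (cp.coeff 0) := Polynomial.eq_C_of_natDegree_eq_zero hnd
    have hlead : cp.coeff 0 = 1 := by
      have h := congrArg Polynomial.leadingCoeff hcp
      rw [Polynomial.leadingCoeff_mul, hmin_monic.leadingCoeff, one_mul, hPmonic.leadingCoeff] at h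
      rw [hcpC, Polynomial.leadingCoeff_C] at h
      exact h.symm
    have hPeq : P = minpoly ℚ xK := by
      rw [hcp, hcpC, hlead, map_one, mul_one]
    set m1 : ℤ := (minpoly ℤ x).coeff 1 with hm1
    set m0 : ℤ := (minpoly ℤ x).coeff 0 with hm0
    have hPc1 : P.coeff 1 = c1 := by rw [hP]; simp
    have hPc0 : P.coeff 0 = c0 := by rw [hP]; simp
    have hco1 : c1 = (m1 : ℚ) := by
      rw [← hPc1, hPeq, hmp, Polynomial.coeff_map, eq_intCast]
    have hco0 : c0 = (m0 : ℚ) := by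
      rw [← hPc0, hPeq, hmp, Polynomial.coeff_map, eq_intCast]
    have hTz : (2*a + b*t : ℤ) = -m1 * (ℓ:ℤ) := by
      rw [hc1def] at hco1
      field_simp at hco1
      have hcast : ((2*a + b*t : ℤ):ℚ) = ((-m1 * (ℓ:ℤ) : ℤ) : ℚ) := by push_cast at hco1 ⊢; linarith [hco1]
      exact_mod_cast hcast
    have hNz : (a^2 + a*b*t + b^2*(q:ℤ) : ℤ) = m0 * (ℓ:ℤ)^2 := by
      rw [hc0def] at hco0
      field_simp at hco0
      have hcast : ((a^2 + a*b*t + b^2*(q:ℤ) : ℤ):ℚ) = ((m0 * (ℓ:ℤ)^2 : ℤ) : ℚ) := by push_cast at hco0 ⊢; linarith [hco0]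
      exact_mod_cast hcast
    have hdisc : ¬ ((ℓ:ℤ)^2 ∣ t^2 - 4*(q:ℤ)) := aux_disc_not_div q t D hD hsqfree ℓ hℓ hℓodd hℓD
    have hdiv : (ℓ:ℤ)^2 ∣ b^2*(t^2 - 4*(q:ℤ)) := by
      refine ⟨m1^2 - 4*m0, ?_⟩
      linear_combination ((2*a + b*t : ℤ) - m1*(ℓ:ℤ)) * hTz + (-4 : ℤ) * hNz
    by_cases hlb : (ℓ:ℤ) ∣ b
    · obtain ⟨b', hb'⟩ := hlb
      have h2a : (ℓ:ℤ) ∣ 2*a := ⟨-m1 - b'*t, by linear_combination hTz - t * hb'⟩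
      have ha : (ℓ:ℤ) ∣ a := (hℓZ.dvd_mul.mp h2a).resolve_left hℓ2
      obtain ⟨a', ha'⟩ := ha
      apply hxS
      have hℓOK : ((ℓ:ℤ) : 𝓞 K) ≠ 0 := Int.cast_ne_zero.mpr (Int.natCast_ne_zero.mpr hℓ.ne_zero)
      have hx' : x = a' • (1:𝓞 K) + b' • φ := by
        have hmul : ((ℓ:ℤ):𝓞 K) * x = ((ℓ:ℤ):𝓞 K) * (a' • (1:𝓞 K) + b' • φ) := by
          rw [zsmul_eq_mul, zsmul_eq_mul, mul_one]
          push_cast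
          rw [← hab', ha', hb']
          push_cast
          ring
        exact mul_left_cancel₀ hℓOK hmul
      rw [hx']
      exact Submodule.add_mem _ (Submodule.smul_mem _ _ (Submodule.subset_span (by simp)))
        (Submodule.smul_mem _ _ (Submodule.subset_span (by simp)))
    · have hcop : IsCoprime ((ℓ:ℤ)) b := (hℓZ.coprime_iff_not_dvd).mpr hlb
      exact hdisc ((hcop.pow (m := 2) (n := 2)).dvd_of_dvd_mul_left hdiv)
end
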